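/- Let s ≥ 2 and let G be an OA(s³,m,s,3). Split the columns of G into two disjoint groups: A with q+1 columns and B = (b_1,…,b_p) with p columns, where m = p+q+1. Let D1 consist of q of the columns of A and let a* denote the remaining column of A; for 1 ≤ k ≤ p let c_k = π_k ∘ a* where π_k is a permutation of {0,…,s−1}, and set C = (c_1,…,c_p). Then for any LH(s³,p) D2 with ⌊D2/s⌋ = sB + C, the pair (D1,D2) is a doubly coupled design DCD(s³,s^q,p); moreover, D1 is an OA(s³,q,s,t) where t = q if q < 3 and t = 3 if q ≥ 3. -/
import Mathlib


/-- An orthogonal array OA(n,m,s,t): an `n × m` array with entries in `{0,…,s-1}`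
such that for every choice of `t` distinct columns, every `t`-tuple of levels
occurs exactly `n / s^t` times among the rows. -/
def IsOA (n m s t : ℕ) (D : ℕ → ℕ → ℕ) : Prop :=
  (∀ r < n, ∀ j < m, D r j < s) ∧
  ∀ f : Fin t → ℕ, (∀ i, f i < m) → Function.Injective f →
    ∀ v : Fin t → ℕ, (∀ i, v i < s) →
      ((Finset.range n).filter (fun r => ∀ i, D r (f i) = v i)).card = n / s ^ t

/-- A Latin hypercube LH(n,m): each column is a permutation of `{0,…,n-1}`. -/
def IsLH (n m : ℕ) (D : ℕ → ℕ → ℕ) : Prop :=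
  ∀ j < m, ∀ v < n, ((Finset.range n).filter (fun r => D r j = v)).card = 1

/-- Doubly coupled design conditions (i) and (ii): for every column of `D1` and each
level, the floors `⌊d/s⌋` of each column of `D2` form a permutation of `{0,…,n/s-1}`,
and for every pair of distinct columns of `D1` and each level combination, the floors
`⌊d/s²⌋` form a permutation of `{0,…,n/s²-1}`. -/
def IsDCD (n s q p : ℕ) (D1 D2 : ℕ → ℕ → ℕ) : Prop :=
  (∀ i < q, ∀ k < p, ∀ a < s, ∀ v < n / s,
    ((Finset.range n).filter (fun r => D1 r i = a ∧ D2 r k / s = v)).card = 1) ∧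
  (∀ i < q, ∀ j < q, i ≠ j → ∀ k < p, ∀ a < s, ∀ b < s, ∀ v < n / s ^ 2,
    ((Finset.range n).filter
      (fun r => D1 r i = a ∧ D1 r j = b ∧ D2 r k / s ^ 2 = v)).card = 1)

lemma forall_fin3 (P : Fin 3 → Prop) : (∀ i, P i) ↔ P 0 ∧ P 1 ∧ P 2 :=
  ⟨fun h => ⟨h 0, h 1, h 2⟩, fun h i => by fin_cases i <;> tauto⟩

lemma forall_fin2 (P : Fin 2 → Prop) : (∀ i, P i) ↔ P 0 ∧ P 1 :=
  ⟨fun h => ⟨h 0, h 1⟩, fun h i => by fin_cases i <;> tauto⟩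

lemma forall_fin1 (P : Fin 1 → Prop) : (∀ i, P i) ↔ P 0 :=
  ⟨fun h => h 0, fun h i => by fin_cases i <;> tauto⟩

lemma count3 {s m : ℕ} {G : ℕ → ℕ → ℕ} (hs : 0 < s) (hG : IsOA (s ^ 3) m s 3 G)
    {c0 c1 c2 : ℕ} (h0 : c0 < m) (h1 : c1 < m) (h2 : c2 < m)
    (h01 : c0 ≠ c1) (h02 : c0 ≠ c2) (h12 : c1 ≠ c2)
    {w0 w1 w2 : ℕ} (hw0 : w0 < s) (hw1 : w1 < s) (hw2 : w2 < s) :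
    ((Finset.range (s ^ 3)).filter
      (fun r => G r c0 = w0 ∧ G r c1 = w1 ∧ G r c2 = w2)).card = 1 := by
  have key := hG.2 ![c0, c1, c2] (by intro i; fin_cases i <;> simpa)
      (by intro i j hij; fin_cases i <;> fin_cases j <;> simp_all)
      ![w0, w1, w2] (by intro i; fin_cases i <;> simpa)
  rw [Nat.div_self (by positivity)] at key
  rw [← key]
  apply congrArg
  apply Finset.filter_congr
  intro r _
  rw [forall_fin3]
  simp

lemma perm_inv {s : ℕ} {f : ℕ → ℕ}
    (hf : ∀ t < s, ((Finset.range s).filter (fun a => f a = t)).card = 1) :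
    ∀ t < s, ∃ b, b < s ∧ f b = t ∧ ∀ x < s, f x = t → x = b := by
  intro t ht
  obtain ⟨b, hb⟩ := Finset.card_eq_one.1 (hf t ht)
  have hbmem : b ∈ (Finset.range s).filter (fun a => f a = t) :=
    hb ▸ Finset.mem_singleton_self b
  obtain ⟨hb1, hb2⟩ := Finset.mem_filter.1 hbmem
  refine ⟨b, Finset.mem_range.1 hb1, hb2, fun x hx hfx => ?_⟩
  have hxm : x ∈ (Finset.range s).filter (fun a => f a = t) :=
    Finset.mem_filter.2 ⟨Finset.mem_range.2 hx, hfx⟩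
  rw [hb] at hxm
  exact Finset.mem_singleton.1 hxm

lemma perm_lt {s : ℕ} {f : ℕ → ℕ}
    (hf : ∀ t < s, ((Finset.range s).filter (fun a => f a = t)).card = 1) :
    ∀ a < s, f a < s := by
  have inner : ∀ t ∈ Finset.range s,
      (((Finset.range s).filter (fun a => f a < s)).filter (fun a => f a = t)).card = 1 := by
    intro t ht
    rw [Finset.filter_filter]
    have hiff : ∀ a ∈ Finset.range s, (f a < s ∧ f a = t) ↔ f a = t := by
      intro a _
      constructor
      · exact fun h => h.2
      · intro h
        exact ⟨by rw [h]; exact Finset.mem_range.1 ht, h⟩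
    rw [Finset.filter_congr hiff]
    exact hf t (Finset.mem_range.1 ht)
  have hcard : ((Finset.range s).filter (fun a => f a < s)).card = s := by
    rw [Finset.card_eq_sum_card_fiberwise (t := Finset.range s) (f := f)
      (fun x hx => Finset.mem_range.2 (Finset.mem_filter.1 hx).2)]
    rw [Finset.sum_congr rfl inner]
    simp
  have heq : (Finset.range s).filter (fun a => f a < s) = Finset.range s :=
    Finset.eq_of_subset_of_card_le (Finset.filter_subset _ _)
      (by rw [hcard, Finset.card_range])
  intro a ha
  have ha' : a ∈ (Finset.range s).filter (fun a => f a < s) := by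
    rw [heq]; exact Finset.mem_range.2 ha
  exact (Finset.mem_filter.1 ha').2

/-- Case 1 of Construction 3 (Proposition 3, DCD part and part (a)): splitting the
columns of an OA(s³,m,s,3) `G` into `A` (q+1 columns, selected by `colA`) and `B`
(p columns, selected by `colB`), deleting column `e` of `A` to get `D1`, level-permuting
the removed column to get `C`, and choosing `D2` with `⌊D2/s⌋ = sB + C` yields a
DCD(s³,s^q,p); moreover `D1` is an OA(s³,q,s,t) with `t = min q 3`. -/
theorem statement8 (s m q p : ℕ) (hs : 2 ≤ s) (hq : 1 ≤ q) (hp : 1 ≤ p)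
    (hm : m = p + q + 1)
    (G : ℕ → ℕ → ℕ) (hG : IsOA (s ^ 3) m s 3 G)
    (colA colB : ℕ → ℕ)
    (hcolA : ∀ c < q + 1, colA c < m) (hcolB : ∀ k < p, colB k < m)
    (hinjA : ∀ c < q + 1, ∀ c' < q + 1, colA c = colA c' → c = c')
    (hinjB : ∀ k < p, ∀ k' < p, colB k = colB k' → k = k')
    (hdisj : ∀ c < q + 1, ∀ k < p, colA c ≠ colB k)
    (e : ℕ) (he : e < q + 1)
    (D1 : ℕ → ℕ → ℕ)
    (hD1 : ∀ r < s ^ 3, ∀ c < q, D1 r c = G r (colA (if c < e then c else c + 1)))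
    (pi : ℕ → ℕ → ℕ)
    (hpi : ∀ k < p, ∀ t < s,
      ((Finset.range s).filter (fun a => pi k a = t)).card = 1)
    (D2 : ℕ → ℕ → ℕ) (hLH : IsLH (s ^ 3) p D2)
    (hD2 : ∀ r < s ^ 3, ∀ k < p,
      D2 r k / s = s * G r (colB k) + pi k (G r (colA e))) :
    IsDCD (s ^ 3) s q p D1 D2 ∧
    IsOA (s ^ 3) q s (if q < 3 then q else 3) D1 := by
  have hs0 : 0 < s := by omega
  have hGlt := hG.1
  have hdiv1 : s ^ 3 / s = s ^ 2 := by
    rw [show s ^ 3 = s * s ^ 2 by ring]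
    exact Nat.mul_div_cancel_left _ hs0
  have hdiv2 : s ^ 3 / s ^ 2 = s := by
    rw [show s ^ 3 = s ^ 2 * s by ring]
    exact Nat.mul_div_cancel_left _ (by positivity)
  have hφlt : ∀ c < q, (if c < e then c else c + 1) < q + 1 := by
    intro c hc; split <;> omega
  have hφne : ∀ c < q, (if c < e then c else c + 1) ≠ e := by
    intro c hc; split <;> omega
  have hφinj : ∀ c < q, ∀ c' < q,
      (if c < e then c else c + 1) = (if c' < e then c' else c' + 1) → c = c' := by
    intro c _ c' _ h
    by_cases h1 : c < e <;> by_cases h2 : c' < e <;> simp [h1, h2] at h <;> omega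
  have hcA : ∀ c < q, colA (if c < e then c else c + 1) < m :=
    fun c hc => hcolA _ (hφlt c hc)
  have hAB : ∀ c < q, ∀ k < p, colA (if c < e then c else c + 1) ≠ colB k :=
    fun c hc k hk => hdisj _ (hφlt c hc) k hk
  have hAe : ∀ c < q, colA (if c < e then c else c + 1) ≠ colA e :=
    fun c hc h => hφne c hc (hinjA _ (hφlt c hc) e he h)
  have hAA : ∀ c < q, ∀ c' < q, c ≠ c' →
      colA (if c < e then c else c + 1) ≠ colA (if c' < e then c' else c' + 1) :=
    fun c hc c' hc' hne h => hne
      (hφinj c hc c' hc' (hinjA _ (hφlt c hc) _ (hφlt c' hc') h))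
  refine ⟨⟨?_, ?_⟩, ?_⟩
  · -- DCD condition (i)
    intro i hi k hk a ha v hv
    rw [hdiv1] at hv
    obtain ⟨a2, ha2s, hpia2, hu⟩ := perm_inv (hpi k hk) (v % s) (Nat.mod_lt _ hs0)
    have hEq : ∀ r ∈ Finset.range (s ^ 3),
        (D1 r i = a ∧ D2 r k / s = v) ↔
        (G r (colA (if i < e then i else i + 1)) = a ∧
          G r (colB k) = v / s ∧ G r (colA e) = a2) := by
      intro r hr
      rw [Finset.mem_range] at hr
      rw [hD1 r hr i hi, hD2 r hr k hk]
      have hE : G r (colA e) < s := hGlt r hr _ (hcolA e he)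
      have hy : pi k (G r (colA e)) < s := perm_lt (hpi k hk) _ hE
      constructor
      · rintro ⟨h1, h2⟩
        refine ⟨h1, ?_, ?_⟩
        · rw [← h2, Nat.mul_add_div hs0, Nat.div_eq_of_lt hy, add_zero]
        · exact hu _ hE (by rw [← h2, Nat.mul_add_mod, Nat.mod_eq_of_lt hy])
      · rintro ⟨h1, h2, h3⟩
        refine ⟨h1, ?_⟩
        rw [h2, h3, hpia2]
        exact Nat.div_add_mod v s
    rw [Finset.filter_congr hEq]
    exact count3 hs0 hG (hcA i hi) (hcolB k hk) (hcolA e he)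
      (hAB i hi k hk) (hAe i hi) (fun h => hdisj e he k hk h.symm)
      ha ((Nat.div_lt_iff_lt_mul hs0).2 (by rw [pow_two] at hv; exact hv)) ha2s
  · -- DCD condition (ii)
    intro i hi j hj hij k hk a ha b hb v hv
    rw [hdiv2] at hv
    have hEq : ∀ r ∈ Finset.range (s ^ 3),
        (D1 r i = a ∧ D1 r j = b ∧ D2 r k / s ^ 2 = v) ↔
        (G r (colA (if i < e then i else i + 1)) = a ∧
          G r (colA (if j < e then j else j + 1)) = b ∧ G r (colB k) = v) := by
      intro r hr
      rw [Finset.mem_range] at hr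
      rw [hD1 r hr i hi, hD1 r hr j hj]
      have hE : G r (colA e) < s := hGlt r hr _ (hcolA e he)
      have hy : pi k (G r (colA e)) < s := perm_lt (hpi k hk) _ hE
      have hdd : D2 r k / s ^ 2 = G r (colB k) := by
        rw [pow_two, ← Nat.div_div_eq_div_mul, hD2 r hr k hk,
          Nat.mul_add_div hs0, Nat.div_eq_of_lt hy, add_zero]
      rw [hdd]
    rw [Finset.filter_congr hEq]
    exact count3 hs0 hG (hcA i hi) (hcA j hj) (hcolB k hk)
      (hAA i hi j hj hij) (hAB i hi k hk) (hAB j hj k hk) ha hb hv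
  · -- OA part
    have hD1lt : ∀ r < s ^ 3, ∀ c < q, D1 r c < s := by
      intro r hr c hc
      rw [hD1 r hr c hc]
      exact hGlt r hr _ (hcA c hc)
    rcases lt_or_ge q 3 with h3 | h3
    · rw [if_pos h3]
      interval_cases q
      · -- q = 1
        refine ⟨hD1lt, ?_⟩
        intro f hf hfinj v hv
        rw [pow_one, hdiv1]
        have hEq : ∀ r ∈ Finset.range (s ^ 3),
            (∀ i, D1 r (f i) = v i) ↔
            G r (colA (if f 0 < e then f 0 else f 0 + 1)) = v 0 := by
          intro r hr
          rw [Finset.mem_range] at hr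
          rw [forall_fin1, hD1 r hr _ (hf 0)]
        rw [Finset.filter_congr hEq]
        rw [Finset.card_eq_sum_card_fiberwise
          (t := Finset.range s ×ˢ Finset.range s)
          (f := fun r => (G r (colA e), G r (colB 0)))
          (fun r hr => by
            have hr' := Finset.mem_range.1 (Finset.mem_filter.1 hr).1
            exact Finset.mem_product.2
              ⟨Finset.mem_range.2 (hGlt _ hr' _ (hcolA e he)),
               Finset.mem_range.2 (hGlt _ hr' _ (hcolB 0 hp))⟩)]
        have inner : ∀ w ∈ Finset.range s ×ˢ Finset.range s,
            (((Finset.range (s ^ 3)).filter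
              (fun r => G r (colA (if f 0 < e then f 0 else f 0 + 1)) = v 0)).filter
              (fun r => (G r (colA e), G r (colB 0)) = w)).card = 1 := by
          intro w hw
          obtain ⟨hw1, hw2⟩ := Finset.mem_product.1 hw
          rw [Finset.filter_filter]
          have hEq2 : ∀ r ∈ Finset.range (s ^ 3),
              (G r (colA (if f 0 < e then f 0 else f 0 + 1)) = v 0 ∧
                (G r (colA e), G r (colB 0)) = w) ↔
              (G r (colA (if f 0 < e then f 0 else f 0 + 1)) = v 0 ∧
                G r (colA e) = w.1 ∧ G r (colB 0) = w.2) := by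
            intro r _
            simp [Prod.ext_iff]
          rw [Finset.filter_congr hEq2]
          exact count3 hs0 hG (hcA _ (hf 0)) (hcolA e he) (hcolB 0 hp)
            (hAe _ (hf 0)) (hAB _ (hf 0) 0 hp) (hdisj e he 0 hp)
            (hv 0) (Finset.mem_range.1 hw1) (Finset.mem_range.1 hw2)
        rw [Finset.sum_congr rfl inner]
        simp [pow_two]
      · -- q = 2
        refine ⟨hD1lt, ?_⟩
        intro f hf hfinj v hv
        rw [hdiv2]
        have hne01 : f 0 ≠ f 1 := fun h => absurd (hfinj h) (by decide)
        have hEq : ∀ r ∈ Finset.range (s ^ 3),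
            (∀ i, D1 r (f i) = v i) ↔
            (G r (colA (if f 0 < e then f 0 else f 0 + 1)) = v 0 ∧
              G r (colA (if f 1 < e then f 1 else f 1 + 1)) = v 1) := by
          intro r hr
          rw [Finset.mem_range] at hr
          rw [forall_fin2, hD1 r hr _ (hf 0), hD1 r hr _ (hf 1)]
        rw [Finset.filter_congr hEq]
        rw [Finset.card_eq_sum_card_fiberwise (t := Finset.range s)
          (f := fun r => G r (colB 0))
          (fun r hr => Finset.mem_range.2
            (hGlt _ (Finset.mem_range.1 (Finset.mem_filter.1 hr).1) _ (hcolB 0 hp)))]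
        have inner : ∀ w ∈ Finset.range s,
            (((Finset.range (s ^ 3)).filter
              (fun r => G r (colA (if f 0 < e then f 0 else f 0 + 1)) = v 0 ∧
                G r (colA (if f 1 < e then f 1 else f 1 + 1)) = v 1)).filter
              (fun r => G r (colB 0) = w)).card = 1 := by
          intro w hw
          rw [Finset.filter_filter]
          have hEq2 : ∀ r ∈ Finset.range (s ^ 3),
              ((G r (colA (if f 0 < e then f 0 else f 0 + 1)) = v 0 ∧
                G r (colA (if f 1 < e then f 1 else f 1 + 1)) = v 1) ∧
                G r (colB 0) = w) ↔
              (G r (colA (if f 0 < e then f 0 else f 0 + 1)) = v 0 ∧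
                G r (colA (if f 1 < e then f 1 else f 1 + 1)) = v 1 ∧
                G r (colB 0) = w) := fun r _ => and_assoc
          rw [Finset.filter_congr hEq2]
          exact count3 hs0 hG (hcA _ (hf 0)) (hcA _ (hf 1)) (hcolB 0 hp)
            (hAA _ (hf 0) _ (hf 1) hne01) (hAB _ (hf 0) 0 hp) (hAB _ (hf 1) 0 hp)
            (hv 0) (hv 1) (Finset.mem_range.1 hw)
        rw [Finset.sum_congr rfl inner]
        simp
    · rw [if_neg (by omega)]
      refine ⟨hD1lt, ?_⟩
      intro f hf hfinj v hv
      have hEq : ∀ r ∈ Finset.range (s ^ 3),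
          (∀ i, D1 r (f i) = v i) ↔
          (∀ i, G r (colA (if f i < e then f i else f i + 1)) = v i) := by
        intro r hr
        rw [Finset.mem_range] at hr
        exact forall_congr' fun i => by rw [hD1 r hr _ (hf i)]
      rw [Finset.filter_congr hEq]
      exact hG.2 (fun i => colA (if f i < e then f i else f i + 1))
        (fun i => hcA _ (hf i))
        (fun i j hij => hfinj (hφinj _ (hf i) _ (hf j)
          (hinjA _ (hφlt _ (hf i)) _ (hφlt _ (hf j)) hij)))
        v hv
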